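/- No Condorcet-consistent tournament rule on n ≥ 3 players is 2-SNM-α for any α < 1/3. -/
import Mathlib


abbrev Tournament (n : ℕ) := Fin n → Fin n → Bool

def IsTournament {n : ℕ} (T : Tournament n) : Prop :=
  (∀ i, T i i = false) ∧ ∀ i j : Fin n, i ≠ j → T i j = !T j i

def CondorcetWinner {n : ℕ} (T : Tournament n) (i : Fin n) : Prop :=
  ∀ j, j ≠ i → T i j = true

def PairAdjacent {n : ℕ} (i j : Fin n) (T T' : Tournament n) : Prop :=
  ∀ a b : Fin n, ¬((a = i ∧ b = j) ∨ (a = j ∧ b = i)) → T a b = T' a b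

def SAdjacent {n : ℕ} (S : Finset (Fin n)) (T T' : Tournament n) : Prop :=
  ∀ a b : Fin n, (a ∉ S ∨ b ∉ S) → T a b = T' a b

def IsRule {n : ℕ} (r : Tournament n → Fin n → ℝ) : Prop :=
  ∀ T, IsTournament T → (∀ i, 0 ≤ r T i) ∧ (∑ i, r T i) = 1

def CondorcetConsistent {n : ℕ} (r : Tournament n → Fin n → ℝ) : Prop :=
  ∀ T, IsTournament T → ∀ i, CondorcetWinner T i → r T i = 1

def SNM2 {n : ℕ} (r : Tournament n → Fin n → ℝ) (α : ℝ) : Prop :=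
  ∀ T T' : Tournament n, IsTournament T → IsTournament T' →
    ∀ i j : Fin n, i ≠ j → PairAdjacent i j T T' →
      r T' i + r T' j - r T i - r T j ≤ α

def SNMk {n : ℕ} (k : ℕ) (r : Tournament n → Fin n → ℝ) (α : ℝ) : Prop :=
  ∀ S : Finset (Fin n), S.card ≤ k → ∀ T T' : Tournament n,
    IsTournament T → IsTournament T' → SAdjacent S T T' →
      (∑ i ∈ S, r T' i) - (∑ i ∈ S, r T i) ≤ α

def flipTo {n : ℕ} (i j : Fin n) (T : Tournament n) : Tournament n :=
  fun a b => if a = i ∧ b = j then true else if a = j ∧ b = i then false else T a b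

def winCount {n : ℕ} (T : Tournament n) (i : Fin n) : ℕ :=
  (Finset.univ.filter fun j => T i j = true).card

def cyclicT (m w : ℕ) : Tournament m :=
  fun i j => decide (1 ≤ (j.val + m - i.val) % m ∧ (j.val + m - i.val) % m ≤ w)

def skT (n : ℕ) : Tournament n :=
  fun i j =>
    if i.val = n - 1 ∧ j.val = 0 then true
    else if i.val = 0 ∧ j.val = n - 1 then false
    else decide (i.val < j.val)

/-- Cycle among first three players, who beat everyone else; rest ordered by index. -/
def cyc3T (n : ℕ) : Tournament n := fun i j =>
  if i.val < 3 ∧ j.val < 3 then decide ((j.val + 3 - i.val) % 3 = 1)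
  else if i.val < 3 then true
  else if j.val < 3 then false
  else decide (i.val < j.val)

lemma cyc3T_isT (n : ℕ) : IsTournament (cyc3T n) := by
  constructor
  · intro i
    unfold cyc3T
    split_ifs <;> simp_all
  · intro i j hij
    have hv : i.val ≠ j.val := fun h => hij (Fin.ext h)
    by_cases hi : i.val < 3 <;> by_cases hj : j.val < 3
    · by_cases h : (i.val + 3 - j.val) % 3 = 1 <;>
        by_cases h2 : (j.val + 3 - i.val) % 3 = 1 <;>
        simp_all [cyc3T] <;> omega
    · simp [cyc3T, hi, hj]
    · simp [cyc3T, hi, hj]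
    · rcases Nat.lt_or_ge i.val j.val with h | h
      · have h' : ¬ j.val < i.val := by omega
        simp [cyc3T, hi, hj, h, h']
      · have h1 : j.val < i.val := by omega
        have h2 : ¬ i.val < j.val := by omega
        simp [cyc3T, hi, hj, h1, h2]

lemma flipTo_isT {n : ℕ} {T : Tournament n} (h : IsTournament T) {i j : Fin n}
    (hij : i ≠ j) : IsTournament (flipTo i j T) := by
  constructor
  · intro x
    unfold flipTo
    split_ifs with h1 h2
    · exact absurd (h1.1.symm.trans h1.2) hij
    · exact absurd (h2.2.symm.trans h2.1) hij
    · exact h.1 x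
  · intro x y hxy
    by_cases h1 : x = i ∧ y = j
    · simp [flipTo, h1.1, h1.2, hij, hij.symm]
    · by_cases h2 : x = j ∧ y = i
      · simp [flipTo, h2.1, h2.2, hij, hij.symm]
      · have d1 : ¬(y = i ∧ x = j) := fun hh => h2 ⟨hh.2, hh.1⟩
        have d2 : ¬(y = j ∧ x = i) := fun hh => h1 ⟨hh.2, hh.1⟩
        simp only [flipTo, if_neg h1, if_neg h2, if_neg d1, if_neg d2]
        exact h.2 x y hxy

lemma flipTo_pairAdjacent {n : ℕ} (i j : Fin n) (T : Tournament n) :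
    PairAdjacent i j T (flipTo i j T) := by
  intro x y h
  have h1 : ¬(x = i ∧ y = j) := fun hh => h (Or.inl hh)
  have h2 : ¬(x = j ∧ y = i) := fun hh => h (Or.inr hh)
  simp [flipTo, h1, h2]

/-- No Condorcet-consistent tournament rule on n ≥ 3 players is 2-SNM-α for α < 1/3. -/
theorem stmt_1 (n : ℕ) (hn : 3 ≤ n) (r : Tournament n → Fin n → ℝ) (α : ℝ)
    (hr : IsRule r) (hcc : CondorcetConsistent r) (hsnm : SNM2 r α) :
    (1:ℝ)/3 ≤ α := by
  classical
  set a : Fin n := ⟨0, by omega⟩ with ha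
  set b : Fin n := ⟨1, by omega⟩ with hb
  set c : Fin n := ⟨2, by omega⟩ with hc
  have hab : a ≠ b := by simp [ha, hb, Fin.ext_iff]
  have hbc : b ≠ c := by simp [hb, hc, Fin.ext_iff]
  have hac : a ≠ c := by simp [ha, hc, Fin.ext_iff]
  set T : Tournament n := cyc3T n with hTdef
  have hT : IsTournament T := cyc3T_isT n
  -- helper to compute T on the cycle: i beats j among first three iff (j+3-i)%3 = 1
  have hTval : ∀ i j : Fin n, i.val < 3 → j.val < 3 →
      T i j = decide ((j.val + 3 - i.val) % 3 = 1) := by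
    intro i j hi hj
    simp [hTdef, cyc3T, hi, hj]
  have hTbig : ∀ i j : Fin n, i.val < 3 → ¬ j.val < 3 → T i j = true := by
    intro i j hi hj
    simp [hTdef, cyc3T, hi, hj]
  -- Condorcet winner lemma: flipping x's unique loss makes x Condorcet.
  -- a loses to c; b loses to a; c loses to b.
  have hCW : ∀ x y : Fin n, x.val < 3 → y.val < 3 →
      (y.val + 3 - x.val) % 3 = 2 →
      CondorcetWinner (flipTo x y T) x := by
    intro x y hx hy hxy j hj
    have hjx : j.val ≠ x.val := fun h => hj (Fin.ext h)
    have hxny : x ≠ y := by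
      intro h
      have := congrArg Fin.val h
      omega
    by_cases hjy : j = y
    · subst hjy; simp [flipTo]
    · have heq : flipTo x y T x j = T x j := by
        simp [flipTo, hjy, hxny]
      rw [heq]
      by_cases hjl : j.val < 3
      · rw [hTval x j hx hjl]
        have hjyv : j.val ≠ y.val := fun h => hjy (Fin.ext h)
        simp only [decide_eq_true_eq]
        omega
      · exact hTbig x j hx hjl
  -- The three flips
  have key : ∀ x y : Fin n, x.val < 3 → y.val < 3 →
      (y.val + 3 - x.val) % 3 = 2 →
      1 - r T x - r T y ≤ α := by
    intro x y hx hy hxy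
    have hxney : x ≠ y := by
      intro h
      have := congrArg Fin.val h
      omega
    have hT' : IsTournament (flipTo x y T) := flipTo_isT hT hxney
    have hadj := flipTo_pairAdjacent x y T
    have h1 := hsnm T (flipTo x y T) hT hT' x y hxney hadj
    have h2 : r (flipTo x y T) x = 1 := hcc _ hT' x (hCW x y hx hy hxy)
    have h3 : 0 ≤ r (flipTo x y T) y := (hr _ hT').1 y
    linarith
  have k1 : 1 - r T a - r T c ≤ α := key a c (by simp [ha]) (by simp [hc]) (by simp [ha, hc])
  have k2 : 1 - r T b - r T a ≤ α := key b a (by simp [hb]) (by simp [ha]) (by simp [ha, hb])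
  have k3 : 1 - r T c - r T b ≤ α := key c b (by simp [hc]) (by simp [hb]) (by simp [hb, hc])
  -- sum of the three probabilities is at most 1
  have hsum : r T a + r T b + r T c ≤ 1 := by
    have hsub : ({a, b, c} : Finset (Fin n)) ⊆ Finset.univ := Finset.subset_univ _
    have hle := Finset.sum_le_sum_of_subset_of_nonneg hsub
      (fun i _ _ => (hr T hT).1 i)
    rw [Finset.sum_insert (by simp [hab, hac]),
        Finset.sum_insert (by simp [hbc]), Finset.sum_singleton,
        (hr T hT).2] at hle
    linarith
  linarith
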